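/- arXiv:2603.00933 — 3 statements merged into one kernel-verified Lean document; each statement's English description precedes it below -/
import Mathlib

section
/- Let $n \ge 2$ be an integer, let $p$ be a real number with $\frac{2n}{n+1} \le p \le \frac{4n-2}{n+1}$, and let $b, c$ be real numbers with $0 < b < c$. Then $Q(u) \ge 0$ for every $u \in (0, b)$. -/
/-!
Writing `r = 1/(p-1)` and `A = (n+1)/(n-1)`, the quadratic splits as
`Q(u) = (A - r)(u - b)(u - c) + r u (b + c - 2u)`.
On `(0, b)` both products are nonnegative, and the lower bound on `p` is exactly `r ≤ A`.
-/

section QuadraticSplitting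

variable {K : Type*} [Field K] [LinearOrder K] [IsStrictOrderedRing K]

theorem quadratic_eq_mul_sub_mul_sub_add (A q b c u : K) :
    (A - 3 / q) * u ^ 2 - (b + c) * (A - 2 / q) * u + b * c * (A - 1 / q)
      = (A - 1 / q) * ((u - b) * (u - c)) + 1 / q * (u * (b + c - 2 * u)) := by
  ring

theorem quadratic_nonneg_of_one_div_le {A q b c u : K} (hq : 0 ≤ q) (hqA : 1 / q ≤ A)
    (hu : 0 ≤ u) (hub : u ≤ b) (hbc : b ≤ c) :
    0 ≤ (A - 3 / q) * u ^ 2 - (b + c) * (A - 2 / q) * u + b * c * (A - 1 / q) := by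
  rw [quadratic_eq_mul_sub_mul_sub_add]
  have hroots : 0 ≤ (u - b) * (u - c) := mul_nonneg_of_nonpos_of_nonpos (by linarith) (by linarith)
  have hslope : 0 ≤ u * (b + c - 2 * u) := mul_nonneg hu (by linarith)
  have hA : 0 ≤ A - 1 / q := sub_nonneg.mpr hqA
  positivity

theorem one_div_sub_one_le_of_two_mul_div_le {m p : K} (hm : 1 < m) (hp : 2 * m / (m + 1) ≤ p) :
    0 < p - 1 ∧ 1 / (p - 1) ≤ (m + 1) / (m - 1) := by
  have hm1 : 0 < (m - 1) / (m + 1) := div_pos (by linarith) (by linarith)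
  have hlow : (m - 1) / (m + 1) ≤ p - 1 := by
    have : 2 * m / (m + 1) - 1 = (m - 1) / (m + 1) := by
      field_simp
      ring
    linarith
  refine ⟨hm1.trans_le hlow, ?_⟩
  simpa using one_div_le_one_div_of_le hm1 hlow

end QuadraticSplitting

theorem Q_nonneg_on_Ioo_general (n : ℕ) (hn : 2 ≤ n) (p b c : ℝ)
    (hp1 : 2 * (n : ℝ) / ((n : ℝ) + 1) ≤ p)
    (hbc : b < c) :
    ∀ u ∈ Set.Ioo (0 : ℝ) b,
      (((n : ℝ) + 1) / ((n : ℝ) - 1) - 3 / (p - 1)) * u ^ 2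
        - (b + c) * (((n : ℝ) + 1) / ((n : ℝ) - 1) - 2 / (p - 1)) * u
        + b * c * (((n : ℝ) + 1) / ((n : ℝ) - 1) - 1 / (p - 1)) ≥ 0 := by
  rintro u ⟨hu0, hub⟩
  have hn1 : (1 : ℝ) < n := by exact_mod_cast hn
  obtain ⟨hp, hpA⟩ := one_div_sub_one_le_of_two_mul_div_le hn1 hp1
  exact quadratic_nonneg_of_one_div_le hp.le hpA hu0.le hub.le hbc.le

theorem Q_nonneg_on_Ioo (n : ℕ) (hn : 2 ≤ n) (p b c : ℝ)
    (hp1 : 2 * (n : ℝ) / ((n : ℝ) + 1) ≤ p) (hp2 : p ≤ (4 * (n : ℝ) - 2) / ((n : ℝ) + 1))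
    (hb : 0 < b) (hbc : b < c) :
    ∀ u ∈ Set.Ioo (0 : ℝ) b,
      (((n : ℝ) + 1) / ((n : ℝ) - 1) - 3 / (p - 1)) * u ^ 2
        - (b + c) * (((n : ℝ) + 1) / ((n : ℝ) - 1) - 2 / (p - 1)) * u
        + b * c * (((n : ℝ) + 1) / ((n : ℝ) - 1) - 1 / (p - 1)) ≥ 0 :=
  Q_nonneg_on_Ioo_general n hn p b c hp1 hbc
end

section
/- Let $n \ge 2$ be an integer, let $\delta \in (-1, 1)$ be a nonzero real number, and let $p$ be a real number with $\frac{2n}{n+1} \le p \le \frac{2n}{n+1} + \frac{(n-1)\left(1 + \sqrt{1 - \delta^2}\right)}{(n+1)\delta^2}$. Then $g(z) \ge 0$ for every $z \in (-1, 1)$. -/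
set_option maxHeartbeats 1000000 in
theorem g_nonneg_main (n : ℕ) (hn : 2 ≤ n) (δ : ℝ) (hδ : δ ∈ Set.Ioo (-1 : ℝ) 1) (hδ0 : δ ≠ 0)
    (p : ℝ) (hp1 : 2 * (n : ℝ) / ((n : ℝ) + 1) ≤ p)
    (hp2 : p ≤ 2 * (n : ℝ) / ((n : ℝ) + 1)
      + ((n : ℝ) - 1) * (1 + Real.sqrt (1 - δ ^ 2)) / (((n : ℝ) + 1) * δ ^ 2)) :
    ∀ z ∈ Set.Ioo (-1 : ℝ) 1,
      (2 * p * ((n : ℝ) + 1) - 5 * (n : ℝ) + 1) / ((n : ℝ) - 1) * z ^ 2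
        + (2 * p * ((n : ℝ) + 1) - 4 * (n : ℝ)) / ((n : ℝ) - 1) * δ * z + 1 ≥ 0 := by
  intro z hz
  obtain ⟨hz1, hz2⟩ := hz
  obtain ⟨hδ1, hδ2⟩ := hδ
  have hN : (2:ℝ) ≤ (n:ℝ) := by exact_mod_cast hn
  set N : ℝ := (n:ℝ) with hNdef
  have hN1 : (0:ℝ) < N - 1 := by linarith
  have hN2 : (0:ℝ) < N + 1 := by linarith
  have hδsq : 0 < δ ^ 2 := by positivity
  have hδsq1 : δ ^ 2 < 1 := by nlinarith
  set s := Real.sqrt (1 - δ ^ 2) with hs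
  have hs0 : 0 ≤ s := Real.sqrt_nonneg _
  have hssq : s ^ 2 = 1 - δ ^ 2 := Real.sq_sqrt (by linarith)
  set A := 2 * p * (N + 1) - 4 * N with hA
  have hA0 : 0 ≤ A := by
    have h := (div_le_iff₀ hN2).mp hp1
    simp only [hA]; nlinarith
  have hA2 : A * δ ^ 2 ≤ 2 * (N - 1) * (1 + s) := by
    have h : p * ((N + 1) * δ ^ 2) ≤ (2 * N / (N + 1)
        + (N - 1) * (1 + s) / ((N + 1) * δ ^ 2)) * ((N + 1) * δ ^ 2) :=
      mul_le_mul_of_nonneg_right hp2 (by positivity)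
    have hrhs : (2 * N / (N + 1) + (N - 1) * (1 + s) / ((N + 1) * δ ^ 2)) * ((N + 1) * δ ^ 2)
        = 2 * N * δ ^ 2 + (N - 1) * (1 + s) := by
      field_simp
    have h' : p * ((N + 1) * δ ^ 2) ≤ 2 * N * δ ^ 2 + (N - 1) * (1 + s) := hrhs ▸ h
    simp only [hA]; nlinarith
  have key : 0 ≤ A * (z ^ 2 + δ * z) + (N - 1) * (1 - z ^ 2) := by
    rcases le_or_gt 0 (z ^ 2 + δ * z) with h | h
    · have h1 : 0 ≤ A * (z ^ 2 + δ * z) := mul_nonneg hA0 h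
      have h2 : 0 < (N - 1) * (1 - z ^ 2) := mul_pos hN1 (by nlinarith)
      linarith
    · have h2 : 0 ≤ 2 * (1 + s) * (z ^ 2 + δ * z) + δ ^ 2 * (1 - z ^ 2) := by
        nlinarith [sq_nonneg ((1 + s) * z + δ)]
      have h3 : A * (z ^ 2 + δ * z) * δ ^ 2 ≥ 2 * (N - 1) * (1 + s) * (z ^ 2 + δ * z) := by
        nlinarith
      have h4 : 0 ≤ (N - 1) * (2 * (1 + s) * (z ^ 2 + δ * z) + δ ^ 2 * (1 - z ^ 2)) :=
        mul_nonneg hN1.le h2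
      nlinarith
  have heq : (2 * p * (N + 1) - 5 * N + 1) / (N - 1) * z ^ 2
      + (2 * p * (N + 1) - 4 * N) / (N - 1) * δ * z + 1
      = (A * (z ^ 2 + δ * z) + (N - 1) * (1 - z ^ 2)) / (N - 1) := by
    simp only [hA]
    field_simp
    ring
  rw [ge_iff_le, heq]
  exact div_nonneg key hN1.le
end

section
/- Let $n \ge 2$ be an integer, let $\delta \in (-1, 1)$ be a nonzero real number, and let $p$ be a real number with $\frac{5n-1}{2(n+1)} < p \le \frac{2n}{n+1} + \frac{n-1}{(n+1)(2 - |\delta|)}$. Then the vertex $z_0 = -\frac{\delta\left[2p(n+1) - 4n\right]}{2\left[2p(n+1) - 5n + 1\right]}$ of the quadratic $g$ satisfies $|z_0| \ge 1$, i.e. $z_0 \notin (-1, 1)$. -/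
/-!
Write `A = 2p(n+1) - 5n + 1` and `B = 2p(n+1) - 4n = A + (n - 1)`, so that `|z₀| = |δ| |B| / (2A)`.
The lower bound on `p` says `A > 0`. Clearing denominators in the upper bound gives
`B (2 - |δ|) ≤ 2(n - 1)`, which after substituting `B = A + (n - 1)` is exactly `2A ≤ |δ| B`.
-/

lemma one_le_abs_neg_mul_div_two_mul {δ A B : ℝ} (hA : 0 < A) (h : 2 * A ≤ |δ| * B) :
    1 ≤ |-(δ * B) / (2 * A)| := by
  rw [abs_div, abs_neg, abs_mul, abs_of_pos (by positivity : (0 : ℝ) < 2 * A),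
    one_le_div (by positivity)]
  exact h.trans (mul_le_mul_of_nonneg_left (le_abs_self B) (abs_nonneg δ))

lemma sub_pos_of_div_lt {N p : ℝ} (hN : 0 < N + 1) (hp : (5 * N - 1) / (2 * (N + 1)) < p) :
    0 < 2 * p * (N + 1) - 5 * N + 1 := by
  rw [div_lt_iff₀ (by positivity)] at hp
  linarith

lemma mul_two_sub_le_of_le_add_div {N p t : ℝ} (hN : 0 < N + 1) (ht : t < 2)
    (hp : p ≤ 2 * N / (N + 1) + (N - 1) / ((N + 1) * (2 - t))) :
    (2 * p * (N + 1) - 4 * N) * (2 - t) ≤ 2 * (N - 1) := by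
  have h2t : 0 < 2 - t := by linarith
  rw [div_add_div _ _ hN.ne' (by positivity), le_div_iff₀ (by positivity)] at hp
  nlinarith

theorem vertex_outside_general (n : ℕ) (δ : ℝ) (hδ : δ ∈ Set.Ioo (-1 : ℝ) 1)
    (p : ℝ)
    (hp1 : (5 * (n : ℝ) - 1) / (2 * ((n : ℝ) + 1)) < p)
    (hp2 : p ≤ 2 * (n : ℝ) / ((n : ℝ) + 1) + ((n : ℝ) - 1) / (((n : ℝ) + 1) * (2 - |δ|))) :
    |(-(δ * (2 * p * ((n : ℝ) + 1) - 4 * (n : ℝ))) / (2 * (2 * p * ((n : ℝ) + 1) - 5 * (n : ℝ) + 1)))| ≥ 1 := by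
  have hN : (0 : ℝ) < n + 1 := by positivity
  have hδ2 : |δ| < 2 := by linarith [abs_lt.mpr hδ]
  have hB := mul_two_sub_le_of_le_add_div hN hδ2 hp2
  exact one_le_abs_neg_mul_div_two_mul (sub_pos_of_div_lt hN hp1) (by linear_combination hB)

theorem vertex_outside (n : ℕ) (hn : 2 ≤ n) (δ : ℝ) (hδ : δ ∈ Set.Ioo (-1 : ℝ) 1)
    (hδ0 : δ ≠ 0) (p : ℝ)
    (hp1 : (5 * (n : ℝ) - 1) / (2 * ((n : ℝ) + 1)) < p)
    (hp2 : p ≤ 2 * (n : ℝ) / ((n : ℝ) + 1) + ((n : ℝ) - 1) / (((n : ℝ) + 1) * (2 - |δ|))) :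
    |(-(δ * (2 * p * ((n : ℝ) + 1) - 4 * (n : ℝ))) / (2 * (2 * p * ((n : ℝ) + 1) - 5 * (n : ℝ) + 1)))| ≥ 1 :=
  vertex_outside_general n δ hδ p hp1 hp2
end
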